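/- There exists a finite alphabet A and a subshift (X,σ) of A^ℤ whose complexity function P_X(n) grows quadratically (P_X(n) = Θ(n²)) and whose automorphism group Aut(X) contains a free semigroup of rank 2; i.e., there exist φ,ψ ∈ Aut(X) such that the natural semigroup homomorphism from the free semigroup on two generators to Aut(X) sending the generators to φ and ψ is injective. (One such example is the subshift on the eight-letter alphabet {0,1,a,b,p,1p,ap,bp} consisting of: the all-0 sequence; all sequences that are 0 except at a single position, where the symbol is one of 1, a, b, p, 1p, ap, bp; and all sequences that are 0 except at two positions, one carrying p and the other carrying one of 1, a, b.) -/

import Mathlib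

open Filter Topology Pointwise

section Defs

variable {A : Type*}

/-- The left shift on bi-infinite sequences over `A`. -/
def shift (x : ℤ → A) : ℤ → A := fun i => x (i + 1)

/-- The word `w` occurs in `x` at position `j`. -/
def OccursAt {n : ℕ} (x : ℤ → A) (w : Fin n → A) (j : ℤ) : Prop :=
  ∀ i : Fin n, x (j + (i : ℤ)) = w i

/-- The word `w` belongs to the language of `X`. -/
def InLanguage (X : Set (ℤ → A)) {n : ℕ} (w : Fin n → A) : Prop :=
  ∃ x ∈ X, OccursAt x w 0

/-- The complexity function of `X`: the number of words of length `n` in the language. -/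
noncomputable def complexity (X : Set (ℤ → A)) (n : ℕ) : ℕ :=
  {w : Fin n → A | InLanguage X w}.ncard

/-- `x` is aperiodic: no positive shift fixes it. -/
def IsAperiodic (x : ℤ → A) : Prop := ∀ p : ℤ, 0 < p → (fun i => x (i + p)) ≠ x

/-- The subshift obtained from `X` by forbidding the word `w`. -/
def Forbid (X : Set (ℤ → A)) {n : ℕ} (w : Fin n → A) : Set (ℤ → A) :=
  {x ∈ X | ∀ j : ℤ, ¬ OccursAt x w j}

/-- `w` extends uniquely `L` times to the right and left in the language of `X`. -/
def ExtendsUniquely (X : Set (ℤ → A)) {n : ℕ} (w : Fin n → A) (L : ℕ) : Prop :=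
  ∃! u : Fin (n + 2 * L) → A,
    InLanguage X u ∧ ∀ i : Fin n, u ⟨L + (i : ℕ), by have := i.isLt; omega⟩ = w i

variable [TopologicalSpace A]

/-- The automorphism group of a subshift `X`: permutations of `X` which are homeomorphisms
and commute with the shift. -/
def Aut (X : Set (ℤ → A)) : Subgroup (Equiv.Perm ↥X) where
  carrier := {φ | Continuous ⇑φ ∧ Continuous ⇑φ.symm ∧
    (∀ x y : ↥X, shift (x : ℤ → A) = (y : ℤ → A) →
      shift ((φ x : ℤ → A)) = ((φ y : ℤ → A))) ∧
    (∀ x y : ↥X, shift (x : ℤ → A) = (y : ℤ → A) →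
      shift ((φ.symm x : ℤ → A)) = ((φ.symm y : ℤ → A)))}
  one_mem' := ⟨continuous_id, continuous_id, fun _ _ h => h, fun _ _ h => h⟩
  mul_mem' := by
    rintro a b ⟨hac, hac', haσ, haσ'⟩ ⟨hbc, hbc', hbσ, hbσ'⟩
    refine ⟨?_, ?_, ?_, ?_⟩
    · simpa using hac.comp hbc
    · simpa [Equiv.Perm.mul_def] using hbc'.comp hac'
    · intro x y h
      simpa using haσ _ _ (hbσ x y h)
    · intro x y h
      simpa [Equiv.Perm.mul_def] using hbσ' _ _ (haσ' x y h)
  inv_mem' := by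
    rintro a ⟨hac, hac', haσ, haσ'⟩
    exact ⟨hac', by exact hac, fun x y h => haσ' x y h, fun x y h => by exact haσ x y h⟩

/-- `f` is a block code of range `R` representing `φ`. -/
def IsBlockCode (X : Set (ℤ → A)) (R : ℕ) (φ : Equiv.Perm ↥X)
    (f : (Fin (2 * R + 1) → A) → A) : Prop :=
  ∀ (x : ↥X) (i : ℤ), (φ x : ℤ → A) i = f (fun j => (x : ℤ → A) (i + (j : ℤ) - R))

/-- `Aut_R(X)`: automorphisms such that both they and their inverses are given by
sliding block codes of range `R`. -/
def AutR (X : Set (ℤ → A)) (R : ℕ) : Set (Equiv.Perm ↥X) :=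
  {φ | φ ∈ Aut X ∧ (∃ f, IsBlockCode X R φ f) ∧ (∃ g, IsBlockCode X R φ⁻¹ g)}

end Defs

/-- Apply a block code of range `R` to a word, shortening it by `2R`. -/
def applyCode {A : Type*} {R n : ℕ} (f : (Fin (2 * R + 1) → A) → A) (w : Fin n → A) :
    Fin (n - 2 * R) → A :=
  fun i => f (fun j => w ⟨(i : ℕ) + (j : ℕ), by have := i.isLt; have := j.isLt; omega⟩)

section Defs2

variable {A : Type*} [TopologicalSpace A]

/-- `φ` preserves occurrences of `v`. -/
def PreservesOcc (X : Set (ℤ → A)) (φ : Equiv.Perm ↥X) {n : ℕ} (v : Fin n → A) : Prop :=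
  ∀ x : ↥X, OccursAt (x : ℤ → A) v 0 → OccursAt ((φ x : ℤ → A)) v 0

/-- `φ` preserves occurrences of `v` which are at least `D` units away from any occurrence of
the words `u 0, …, u (i-1)`. -/
def PreservesOccAway (X : Set (ℤ → A)) (φ : Equiv.Perm ↥X) {n : ℕ} (v : Fin n → A)
    (D : ℕ) (ml : ℕ → ℕ) (u : ∀ t, Fin (ml t) → A) (i : ℕ) : Prop :=
  ∀ x : ↥X, OccursAt (x : ℤ → A) v 0 →
    (∀ t < i, ∀ p : ℤ, -(D : ℤ) ≤ p → p + ml t ≤ n + D → ¬ OccursAt (x : ℤ → A) (u t) p) →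
    OccursAt ((φ x : ℤ → A)) v 0

end Defs2

/-- A countable discrete group is amenable if it admits a Følner sequence. -/
def FolnerAmenable (G : Type*) [Group G] : Prop :=
  ∃ F : ℕ → Set G, (∀ k, (F k).Finite) ∧
    (∀ g : G, ∀ᶠ k in atTop, g ∈ F k) ∧
    ∀ g : G, Tendsto (fun k => ((symmDiff (g • F k) (F k)).ncard : ℝ) / ((F k).ncard : ℝ))
      atTop (𝓝 0)

/-! A letter is a marker bit and an optional label. At most one cell is marked and at most one
is labelled, so a word of length `n` is fixed by two positions and their letters, whence
`P_X(n) = Θ(n²)`. The automorphism `labelAut σ` moves the label one cell to the right, applying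
`σ` as the label leaves the marked cell. In a product of such maps, a label starting `k` cells
left of the marker crosses it during the `(k+1)`-st factor from the right, so the final label
reveals that factor, while a label starting right of the marker is just translated by the length
of the product. -/

open Function

section FullShift

variable {A : Type*}

theorem continuous_slidingRule {B : Type*} [TopologicalSpace A] [DiscreteTopology A]
    [TopologicalSpace B] (F : A → A → B) (g : ℤ → ℤ) :
    Continuous fun (x : ℤ → A) (i : ℤ) => F (x i) (x (g i)) :=
  have hF : Continuous fun p : A × A => F p.1 p.2 := continuous_of_discreteTopology
  continuous_pi fun i => hF.comp (by fun_prop : Continuous fun x : ℤ → A => (x i, x (g i)))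

theorem isClosed_setOf_subsingleton [TopologicalSpace A] [DiscreteTopology A] (P : A → Prop) :
    IsClosed {x : ℤ → A | {i | P (x i)}.Subsingleton} := by
  have h : {x : ℤ → A | {i | P (x i)}.Subsingleton} =
      ⋂ i, ⋂ j, (fun x : ℤ → A => (x i, x j)) ⁻¹' {p | P p.1 → P p.2 → i = j} := by
    ext x
    simp only [Set.Subsingleton, Set.mem_ofPred_eq, Set.mem_iInter, Set.mem_preimage]
    exact ⟨fun h i j hi hj => h hi hj, fun h i hi j hj => h i j hi hj⟩
  rw [h]
  exact isClosed_iInter fun i => isClosed_iInter fun j =>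
    (isClosed_discrete _).preimage ((continuous_apply i).prodMk (continuous_apply j))

theorem subsingleton_setOf_add_iff (P : ℤ → Prop) (k : ℤ) :
    {i | P (i + k)}.Subsingleton ↔ {i | P i}.Subsingleton := by
  constructor
  · intro h i hi j hj
    have := @h (i - k) (by simpa using hi) (j - k) (by simpa using hj)
    omega
  · intro h i hi j hj
    have := h hi hj
    omega

theorem shift_image_eq_of_shift_mem_iff {X : Set (ℤ → A)} (h : ∀ x, shift x ∈ X ↔ x ∈ X) :
    shift '' X = X := by
  ext x
  constructor
  · rintro ⟨y, hy, rfl⟩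
    exact (h y).2 hy
  · intro hx
    have hx' : shift (fun i => x (i - 1)) = x := funext fun i => by simp [shift]
    exact ⟨_, (h _).1 (by rwa [hx']), hx'⟩

theorem card_le_complexity [Finite A] {X : Set (ℤ → A)} {ι : Type*} {n : ℕ} (x : ι → ℤ → A)
    (hx : ∀ j, x j ∈ X) (hinj : Injective fun j (k : Fin n) => x j k) :
    Nat.card ι ≤ complexity X n := by
  rw [← Set.ncard_range_of_injective hinj]
  refine Set.ncard_le_ncard ?_ (Set.toFinite _)
  rintro _ ⟨j, rfl⟩
  exact ⟨x j, hx j, fun k => by simp⟩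

theorem subtypePerm_mem_Aut [TopologicalSpace A] {X : Set (ℤ → A)} (f : Equiv.Perm (ℤ → A))
    (hf : Continuous f) (hf_symm : Continuous f.symm) (hshift : ∀ x, f (shift x) = shift (f x))
    (hX : ∀ x, f x ∈ X ↔ x ∈ X) : f.subtypePerm hX ∈ Aut X := by
  have hshift_symm : ∀ x, f.symm (shift x) = shift (f.symm x) := fun x =>
    f.injective (by rw [hshift, Equiv.apply_symm_apply, Equiv.apply_symm_apply])
  refine ⟨(hf.comp continuous_subtype_val).subtype_mk _,
    (hf_symm.comp continuous_subtype_val).subtype_mk _, fun x y h => ?_, fun x y h => ?_⟩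
  · simp [← h, hshift]
  · change shift (f.symm x) = f.symm y
    rw [← h, hshift_symm]

end FullShift

theorem ncard_subsingleton_ne_le {B : Type*} [Fintype B] (b : B) (n : ℕ) :
    {v : Fin n → B | {k | v k ≠ b}.Subsingleton}.ncard ≤ n * Fintype.card B + 1 := by
  classical
  let word : Option (Fin n × B) → Fin n → B :=
    fun o k => o.elim b fun p => if k = p.1 then p.2 else b
  have hsub : {v : Fin n → B | {k | v k ≠ b}.Subsingleton} ⊆ Set.range word := by
    intro v hv
    rcases Set.Subsingleton.eq_empty_or_singleton hv with h | ⟨k, hk⟩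
    · refine ⟨none, funext fun i => ?_⟩
      by_contra hi
      exact (Set.eq_empty_iff_forall_notMem.1 h) i (Ne.symm hi)
    · refine ⟨some (k, v k), funext fun i => ?_⟩
      by_cases hik : i = k
      · simp [word, hik]
      · have : v i = b := by
          by_contra hi
          have hmem : i ∈ {k | v k ≠ b} := hi
          exact hik (by simpa [hk] using hmem)
        simp [word, hik, this]
  calc _ ≤ (Set.range word).ncard := Set.ncard_le_ncard hsub (Set.toFinite _)
    _ ≤ Nat.card (Option (Fin n × B)) := by
      rw [← Set.image_univ]; exact (Set.ncard_image_le (Set.toFinite _)).trans (by simp)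
    _ = n * Fintype.card B + 1 := by simp

theorem FreeSemigroup.lift_injective_of_injective_prod {β M : Type*} [Monoid M] {f : β → M}
    (hf : Injective fun l : List β => (l.map f).prod) : Injective (FreeSemigroup.lift f) := by
  have hlift : ∀ x, FreeSemigroup.lift f x = FreeMonoid.lift f (FreeSemigroup.toFreeMonoid x) := by
    intro x
    induction x using FreeSemigroup.recOnMul with
    | ih1 x => rfl
    | ih2 x y _ ih => rw [map_mul, map_mul, map_mul, ih]; rfl
  intro x y h
  rw [hlift, hlift, FreeMonoid.lift_apply, FreeMonoid.lift_apply] at h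
  exact FreeSemigroup.toFreeMonoid_injective (FreeMonoid.toList.injective (hf h))

section MarkerLabel

variable {A C : Type*} (e : A ≃ Bool × Option C)

-- `(e a).1` is the paper's marker `p` and `(e a).2` its label `1, a, b` (`none` for `0`).
def markerLabelShift : Set (ℤ → A) :=
  {x | {i | (e (x i)).1 ≠ false}.Subsingleton ∧ {i | (e (x i)).2 ≠ none}.Subsingleton}

theorem isClosed_markerLabelShift [TopologicalSpace A] [DiscreteTopology A] :
    IsClosed (markerLabelShift e) :=
  (isClosed_setOf_subsingleton fun a => (e a).1 ≠ false).inter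
    (isClosed_setOf_subsingleton fun a => (e a).2 ≠ none)

theorem shift_image_markerLabelShift : shift '' markerLabelShift e = markerLabelShift e :=
  shift_image_eq_of_shift_mem_iff fun x =>
    and_congr (subsingleton_setOf_add_iff (fun i => (e (x i)).1 ≠ false) 1)
      (subsingleton_setOf_add_iff (fun i => (e (x i)).2 ≠ none) 1)

theorem complexity_markerLabelShift_le [Fintype A] [Fintype C] (n : ℕ) :
    complexity (markerLabelShift e) n ≤ (n * 2 + 1) * (n * (Fintype.card C + 1) + 1) := by
  let layers (w : Fin n → A) : (Fin n → Bool) × (Fin n → Option C) :=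
    (fun k => (e (w k)).1, fun k => (e (w k)).2)
  have hlayers : ∀ w ∈ {w : Fin n → A | InLanguage (markerLabelShift e) w},
      layers w ∈ {v | {k | v k ≠ false}.Subsingleton} ×ˢ {v | {k | v k ≠ none}.Subsingleton} := by
    rintro w ⟨x, ⟨hmarker, hlabel⟩, hocc⟩
    obtain rfl : w = fun k : Fin n => x k := funext fun k => by simpa using (hocc k).symm
    have hcast : Injective fun k : Fin n => (k : ℤ) := Nat.cast_injective.comp Fin.val_injective
    exact ⟨hmarker.preimage hcast, hlabel.preimage hcast⟩
  have hinj : Set.InjOn layers {w | InLanguage (markerLabelShift e) w} := by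
    intro w _ w' _ h
    simp only [layers, Prod.mk.injEq] at h
    exact funext fun k => e.injective (Prod.ext (congrFun h.1 k) (congrFun h.2 k))
  calc complexity (markerLabelShift e) n
      ≤ ({v : Fin n → Bool | {k | v k ≠ false}.Subsingleton} ×ˢ
          {v : Fin n → Option C | {k | v k ≠ none}.Subsingleton}).ncard :=
        Set.ncard_le_ncard_of_injOn layers hlayers hinj (Set.toFinite _)
    _ = {v : Fin n → Bool | {k | v k ≠ false}.Subsingleton}.ncard *
          {v : Fin n → Option C | {k | v k ≠ none}.Subsingleton}.ncard := Set.ncard_prod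
    _ ≤ (n * 2 + 1) * (n * (Fintype.card C + 1) + 1) := by
      gcongr
      · exact ncard_subsingleton_ne_le false n
      · simpa using ncard_subsingleton_ne_le (none : Option C) n

def point (m d : ℤ) (c : C) : ℤ → A :=
  fun i => e.symm (decide (i = m), if i = d then some c else none)

@[simp]
theorem point_apply (m d : ℤ) (c : C) (i : ℤ) :
    e (point e m d c i) = (decide (i = m), if i = d then some c else none) := by
  simp [point]

theorem point_mem (m d : ℤ) (c : C) : point e m d c ∈ markerLabelShift e :=
  ⟨Set.subsingleton_singleton.anti fun i hi => by simpa using hi,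
    Set.subsingleton_singleton.anti fun i hi => by simpa using hi⟩

theorem le_complexity_markerLabelShift [Finite A] (c : C) (n : ℕ) :
    n * n ≤ complexity (markerLabelShift e) n := by
  have hinj : Injective fun (p : Fin n × Fin n) (k : Fin n) => point e p.1 p.2 c k := by
    rintro ⟨m, d⟩ ⟨m', d'⟩ h
    have hm := congrArg (fun w => (e (w m)).1) h
    have hd := congrArg (fun w => (e (w d)).2) h
    simp only [point_apply] at hm hd
    simp_all [Fin.ext_iff]
  simpa using card_le_complexity _ (fun p => point_mem e _ _ c) hinj

def markerTwist (σ : Equiv.Perm C) (m : Bool) : Equiv.Perm (Option C) :=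
  if m then σ.optionCongr else 1

@[simp]
theorem markerTwist_none (σ : Equiv.Perm C) (m : Bool) : markerTwist σ m none = none := by
  cases m <;> rfl

@[simp]
theorem markerTwist_eq_none_iff (σ : Equiv.Perm C) (m : Bool) (o : Option C) :
    markerTwist σ m o = none ↔ o = none := by
  conv_rhs => rw [← (markerTwist σ m).apply_eq_iff_eq, markerTwist_none]

theorem markerTwist_some (σ : Equiv.Perm C) (m : Bool) (c : C) :
    markerTwist σ m (some c) = some (if m then σ c else c) := by
  cases m <;> rfl

def labelShift (σ : Equiv.Perm C) : Equiv.Perm (ℤ → A) where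
  toFun x i := e.symm ((e (x i)).1, markerTwist σ (e (x (i - 1))).1 (e (x (i - 1))).2)
  invFun x i := e.symm ((e (x i)).1, (markerTwist σ (e (x i)).1).symm (e (x (i + 1))).2)
  left_inv x := funext fun i => by simp
  right_inv x := funext fun i => by simp

theorem labelShift_mem_iff (σ : Equiv.Perm C) (x : ℤ → A) :
    labelShift e σ x ∈ markerLabelShift e ↔ x ∈ markerLabelShift e := by
  simp only [markerLabelShift, labelShift, Equiv.coe_fn_mk, Set.mem_ofPred_eq,
    Equiv.apply_symm_apply, ne_eq, markerTwist_eq_none_iff]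
  exact and_congr_right' (subsingleton_setOf_add_iff (fun i => ¬(e (x i)).2 = none) (-1))

theorem labelShift_shift (σ : Equiv.Perm C) (x : ℤ → A) :
    labelShift e σ (shift x) = shift (labelShift e σ x) := by
  funext i
  simp [labelShift, shift]

def labelAut (σ : Equiv.Perm C) : Equiv.Perm (markerLabelShift e) :=
  (labelShift e σ).subtypePerm (labelShift_mem_iff e σ)

theorem labelAut_mem_Aut [TopologicalSpace A] [DiscreteTopology A] (σ : Equiv.Perm C) :
    labelAut e σ ∈ Aut (markerLabelShift e) :=
  subtypePerm_mem_Aut _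
    (continuous_slidingRule (fun a a' => e.symm ((e a).1, markerTwist σ (e a').1 (e a').2))
      (· - 1))
    (continuous_slidingRule (fun a a' => e.symm ((e a).1, (markerTwist σ (e a).1).symm (e a').2))
      (· + 1))
    (labelShift_shift e σ) (labelShift_mem_iff e σ)

theorem labelAut_point (σ : Equiv.Perm C) (m d : ℤ) (c : C) :
    labelAut e σ ⟨point e m d c, point_mem e m d c⟩ =
      ⟨point e m (d + 1) (if d = m then σ c else c), point_mem e _ _ _⟩ := by
  refine Subtype.ext (funext fun i => e.injective ?_)
  by_cases hi : i = d + 1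
  · subst hi
    simp [labelAut, labelShift, markerTwist_some]
  · simp [labelAut, labelShift, hi, show i - 1 ≠ d by omega]

variable {β : Type*}

theorem prod_labelAut_point (σ : β → Equiv.Perm C) (l : List β) {m d : ℤ} (c : C)
    (hl : ∀ k < l.length, d + k ≠ m) :
    (l.map fun b => labelAut e (σ b)).prod ⟨point e m d c, point_mem e m d c⟩ =
      ⟨point e m (d + l.length) c, point_mem e _ _ _⟩ := by
  induction l with
  | nil => simp
  | cons b l ih =>
    have hlast : d + l.length ≠ m := hl l.length (by simp)
    rw [List.map_cons, List.prod_cons, Equiv.Perm.mul_apply,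
      ih fun k hk => hl k (by rw [List.length_cons]; omega), labelAut_point, if_neg hlast]
    simp [add_assoc]

variable {e} {σ : β → Equiv.Perm C}

theorem length_eq_of_prod_labelAut_eq [Nonempty C] {u v : List β}
    (h : (u.map fun b => labelAut e (σ b)).prod = (v.map fun b => labelAut e (σ b)).prod) :
    u.length = v.length := by
  obtain ⟨c⟩ := ‹Nonempty C›
  have hpt := congrArg (fun g : Equiv.Perm (markerLabelShift e) =>
    (e ((g ⟨point e 0 1 c, point_mem e 0 1 c⟩ : ℤ → A) (1 + u.length))).2) h
  simp only [prod_labelAut_point e σ u c (m := 0) (d := 1) (fun k _ => by omega),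
    prod_labelAut_point e σ v c (m := 0) (d := 1) (fun k _ => by omega), point_apply] at hpt
  simpa using hpt

theorem injective_prod_labelAut {c : C} (hσ : Injective fun b => σ b c) :
    Injective fun l : List β => (l.map fun b => labelAut e (σ b)).prod := by
  have : Nonempty C := ⟨c⟩
  intro u
  induction u with
  | nil =>
    intro v h
    exact (List.length_eq_zero_iff.1 (length_eq_of_prod_labelAut_eq h).symm).symm
  | cons b u ih =>
    intro w h
    dsimp only at h
    obtain ⟨b', v, rfl⟩ : ∃ b' v, w = b' :: v := List.exists_cons_of_length_pos
      (by simp [← length_eq_of_prod_labelAut_eq h])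
    have hlen : u.length = v.length := by simpa using length_eq_of_prod_labelAut_eq h
    have hcross := congrArg (fun g : Equiv.Perm (markerLabelShift e) =>
      (e ((g ⟨point e 0 (-u.length) c, point_mem e _ _ c⟩ : ℤ → A) 1)).2) h
    simp only [List.map_cons, List.prod_cons, Equiv.Perm.mul_apply] at hcross
    rw [prod_labelAut_point e σ u c (fun k hk => by omega),
      prod_labelAut_point e σ v c (fun k hk => by omega)] at hcross
    simp only [hlen, neg_add_cancel, labelAut_point, zero_add, ↓reduceIte, point_apply,
      one_ne_zero, decide_false, Option.some.injEq] at hcross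
    obtain rfl : b = b' := hσ hcross
    rw [ih (mul_left_cancel h)]

end MarkerLabel

/-- **Theorem (Salo–Schraudner / Section 5 example).** There exists a subshift `(X, σ)`
over a finite alphabet whose complexity function grows quadratically (`P_X(n) = Θ(n²)`)
and whose automorphism group contains a free semigroup of rank 2. -/
theorem exists_quadratic_subshift_with_free_semigroup :
    ∃ (N : ℕ) (X : Set (ℤ → Fin N)),
      X.Nonempty ∧ IsClosed X ∧ shift '' X = X ∧
      (∃ c₁ c₂ : ℝ, 0 < c₁ ∧ 0 < c₂ ∧ ∀ᶠ n : ℕ in atTop,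
        c₁ * (n : ℝ) ^ 2 ≤ (complexity X n : ℝ) ∧ (complexity X n : ℝ) ≤ c₂ * (n : ℝ) ^ 2) ∧
      ∃ φ ψ : Equiv.Perm ↥X, φ ∈ Aut X ∧ ψ ∈ Aut X ∧
        Function.Injective
          ⇑(FreeSemigroup.lift (fun b : Bool => if b then φ else ψ) :
            FreeSemigroup Bool →ₙ* Equiv.Perm ↥X) := by
  obtain ⟨e⟩ : Nonempty (Fin 6 ≃ Bool × Option Bool) := ⟨Fintype.equivOfCardEq rfl⟩
  let σ (b : Bool) : Equiv.Perm Bool := if b then 1 else Equiv.swap false true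
  have hσ : Injective fun b => σ b true := fun a b h => by cases a <;> cases b <;> simp_all [σ]
  have hgen : (fun b : Bool => if b then labelAut e 1 else labelAut e (Equiv.swap false true)) =
      fun b => labelAut e (σ b) := by
    funext b; cases b <;> rfl
  refine ⟨6, markerLabelShift e, ⟨_, point_mem e 0 0 true⟩, isClosed_markerLabelShift e,
    shift_image_markerLabelShift e, ⟨1, 12, one_pos, by norm_num, ?_⟩, _, _,
    labelAut_mem_Aut e 1, labelAut_mem_Aut e (Equiv.swap false true), ?_⟩
  · filter_upwards [eventually_ge_atTop 1] with n hn
    have hlower := le_complexity_markerLabelShift e true n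
    have hupper := complexity_markerLabelShift_le e n
    simp only [Fintype.card_bool] at hupper
    have hn' : (1 : ℝ) ≤ n := by exact_mod_cast hn
    constructor
    · calc 1 * (n : ℝ) ^ 2 = ((n * n : ℕ) : ℝ) := by push_cast; ring
        _ ≤ _ := by exact_mod_cast hlower
    · calc (complexity (markerLabelShift e) n : ℝ) ≤ ((n * 2 + 1) * (n * (2 + 1) + 1) : ℕ) := by
            exact_mod_cast hupper
        _ ≤ 12 * (n : ℝ) ^ 2 := by push_cast; nlinarith
  · rw [hgen]
    exact FreeSemigroup.lift_injective_of_injective_prod (injective_prod_labelAut hσ)
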